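/- arXiv:1503.05025 — 4 statements merged into one kernel-verified Lean document; each statement's English description precedes it below -/
import Mathlib

section
/- Given a 𝒞-index i of f (f = f_i), membership of f in the anticomplex set A_{𝒞,h} is decidable uniformly in i: there is a computable function d : ℕ → Bool such that d(i) = true iff f_i ∈ A_{𝒞,h}. -/
/-!
`f_i` extends each of its own prefixes, so `K_𝒞(f_i↾n) ≤ i ≤ h(n)` as soon as `n ≥ m(i)`.
Membership of `f_i` in `A_{𝒞,h}` therefore only has to be checked at the finitely many
`n < m(i)`, and there `K_𝒞(f_i↾n) ≤ h(n)` is a bounded search over the indices `k ≤ h(n)`.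
-/

/-- `f` extends the finite sequence `v`. -/
def Extends (f : ℕ → ℕ) (v : List ℕ) : Prop := ∀ j, ∀ _h : j < v.length, f j = v.getD j 0

/-- prefix `f↾n = (f 0, …, f (n-1))`. -/
def pref (f : ℕ → ℕ) (n : ℕ) : List ℕ := (List.range n).map f

/-- `K_𝒞` of a finite sequence, where `𝒞 = {F i : i ∈ ℕ}`. -/
noncomputable def KCv (F : ℕ → ℕ → ℕ) (v : List ℕ) : ℕ∞ :=
  sInf ((fun i : ℕ => (i : ℕ∞)) '' {i | Extends (F i) v})

/-- `K_𝒞` of a function. -/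
noncomputable def KCf (F : ℕ → ℕ → ℕ) (f : ℕ → ℕ) : ℕ∞ :=
  sInf ((fun i : ℕ => (i : ℕ∞)) '' {i | F i = f})

namespace ComputablePred

variable {α β : Type*} [Primcodable α] [Primcodable β]

open Computable

theorem eq [DecidableEq β] {f g : α → β} (hf : Computable f) (hg : Computable g) :
    ComputablePred fun a => f a = g a :=
  (Primrec.eq.decide.to_comp.comp hf hg).computablePred

theorem exists_lt {p : α → ℕ → Prop} (hp : ComputablePred fun q : α × ℕ => p q.1 q.2)
    {n : α → ℕ} (hn : Computable n) : ComputablePred fun a => ∃ k < n a, p a k := by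
  classical
  have hstep : Computable₂ fun (a : α) (s : ℕ × Bool) => s.2 || decide (p a s.1) :=
    (Primrec.or.to_comp.comp (snd.comp snd) (hp.decide.comp (fst.pair (fst.comp snd)))).to₂
  suffices Computable fun a => decide (∃ k < n a, p a k) from this.computablePred
  refine (nat_rec hn (const false) hstep).of_eq fun a => ?_
  induction n a with
  | zero => simp
  | succ N ih => simp only [ih, Nat.exists_lt_succ_right, Bool.decide_or]

theorem forall_lt {p : α → ℕ → Prop} (hp : ComputablePred fun q : α × ℕ => p q.1 q.2)
    {n : α → ℕ} (hn : Computable n) : ComputablePred fun a => ∀ k < n a, p a k :=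
  (exists_lt (p := fun a k => ¬p a k) hp.not hn).not.of_eq fun a => by simp

end ComputablePred

section KC

variable {F : ℕ → ℕ → ℕ}

theorem extends_pref_iff {g f : ℕ → ℕ} {n : ℕ} : Extends g (pref f n) ↔ ∀ j < n, g j = f j := by
  simp +contextual [Extends, pref]

theorem KCv_le_coe_iff {v : List ℕ} {j : ℕ} : KCv F v ≤ j ↔ ∃ k ≤ j, Extends (F k) v := by
  refine ⟨fun hle => ?_, fun ⟨k, hkj, hk⟩ =>
    (sInf_le (Set.mem_image_of_mem _ hk)).trans (Nat.cast_le.2 hkj)⟩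
  by_contra! hno
  have hlt : ((j + 1 : ℕ) : ℕ∞) ≤ KCv F v :=
    le_sInf <| Set.forall_mem_image.2 fun k hk =>
      Nat.cast_le.2 <| Nat.succ_le_of_lt <| lt_of_not_ge fun hkj => hno k hkj hk
  exact (Nat.cast_le.1 (hlt.trans hle)).not_gt (Nat.lt_succ_self j)

theorem KCv_pref_le_coe_iff {f : ℕ → ℕ} {n j : ℕ} :
    KCv F (pref f n) ≤ j ↔ ∃ k < j + 1, ∀ l < n, F k l = f l := by
  simp only [KCv_le_coe_iff, extends_pref_iff, Nat.lt_succ_iff]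

theorem KCv_pref_self_le {i n j : ℕ} (hij : i ≤ j) : KCv F (pref (F i) n) ≤ j :=
  KCv_le_coe_iff.2 ⟨i, hij, extends_pref_iff.2 fun _ _ => rfl⟩

theorem forall_KCv_pref_self_le_iff {h : ℕ → ℕ} {i N : ℕ} (hN : ∀ n, N ≤ n → i ≤ h n) :
    (∀ n, KCv F (pref (F i) n) ≤ h n) ↔ ∀ n < N, KCv F (pref (F i) n) ≤ h n :=
  ⟨fun H n _ => H n, fun H n => (lt_or_ge n N).elim (H n) fun hn => KCv_pref_self_le (hN n hn)⟩

open Computable in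
theorem computablePred_forall_lt_KCv_pref_self_le
    (hF : Computable fun p : ℕ × ℕ => F p.1 p.2) {h : ℕ → ℕ} (hc : Computable h)
    {N : ℕ → ℕ} (hN : Computable N) :
    ComputablePred fun i => ∀ n < N i, KCv F (pref (F i) n) ≤ h n := by
  simp only [KCv_pref_le_coe_iff]
  have hagree : ComputablePred fun q : (ℕ × ℕ) × ℕ => ∀ l < q.1.2, F q.2 l = F q.1.1 l :=
    .forall_lt (p := fun q l => F q.2 l = F q.1.1 l)
      (.eq (hF.comp ((snd.comp fst).pair snd)) (hF.comp ((fst.comp (fst.comp fst)).pair snd)))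
      (snd.comp fst)
  exact .forall_lt (.exists_lt hagree (succ.comp (hc.comp snd))) hN

end KC

theorem stmt5_general (F : ℕ → ℕ → ℕ) (hF : Computable fun p : ℕ × ℕ => F p.1 p.2)
    (h : ℕ → ℕ) (hc : Computable h) (hmono : Monotone h)
    (m : ℕ → ℕ) (hm : Computable m) (hmod : ∀ k, k ≤ h (m k)) :
    ∃ d : ℕ → Bool, Computable d ∧
      ∀ i, d i = true ↔ ∀ n, KCv F (pref (F i) n) ≤ (h n : ℕ∞) := by
  have hA : ComputablePred fun i => ∀ n, KCv F (pref (F i) n) ≤ h n :=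
    (computablePred_forall_lt_KCv_pref_self_le hF hc hm).of_eq fun i =>
      (forall_KCv_pref_self_le_iff fun _ hn => (hmod i).trans (hmono hn)).symm
  obtain ⟨_, hd⟩ := hA
  exact ⟨_, hd, fun _ => decide_eq_true_iff⟩

/-- membership in `A_{𝒞,h}` is decidable uniformly in a `𝒞`-index. -/
theorem stmt5 (F : ℕ → ℕ → ℕ) (hF : Computable fun p : ℕ × ℕ => F p.1 p.2)
    (b : List ℕ → ℕ) (hb : Computable b) (hbw : ∀ v, Extends (F (b v)) v)
    (h : ℕ → ℕ) (hc : Computable h) (hmono : Monotone h)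
    (m : ℕ → ℕ) (hm : Computable m) (hmod : ∀ k, k ≤ h (m k)) :
    ∃ d : ℕ → Bool, Computable d ∧
      ∀ i, d i = true ↔ ∀ n, KCv F (pref (F i) n) ≤ (h n : ℕ∞) :=
  stmt5_general F hF h hc hmono m hm hmod
end

section
/- If the class 𝒞 is dense in Baire space, then the anticomplex set A_{𝒞,h} has empty interior in 𝒞: for every finite sequence u, the set [u] ∩ 𝒞 is not contained in A_{𝒞,h}. -/
lemma pref_eq_of_extends (g : ℕ → ℕ) (v : List ℕ) (hg : Extends g v) :
    pref g v.length = v := by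
  apply List.ext_getElem
  · simp [pref]
  · intro j h1 h2
    simp only [pref, List.getElem_map, List.getElem_range]
    rw [hg j h2, List.getD_eq_getElem _ _ h2]

/-- if `𝒞` is dense then `A_{𝒞,h}` has empty interior in `𝒞`. -/
theorem stmt6 (F : ℕ → ℕ → ℕ) (hdense : ∀ v : List ℕ, ∃ i, Extends (F i) v)
    (h : ℕ → ℕ) (hmono : Monotone h) (hunb : ∀ k, ∃ n, k ≤ h n)
    (u : List ℕ) :
    ∃ g : ℕ → ℕ, (∃ i, F i = g) ∧ Extends g u ∧
      ¬ (∀ n, KCv F (pref g n) ≤ (h n : ℕ∞)) := by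
  set n := u.length + 1 with hn
  set N := h n with hN
  set i : ℕ := 1 + (Finset.range (N + 1)).sup (fun j => F j u.length) with hi
  set v : List ℕ := u ++ [i] with hv
  obtain ⟨idx, hidx⟩ := hdense v
  refine ⟨F idx, ⟨idx, rfl⟩, ?_, ?_⟩
  · intro j hj
    have hj' : j < v.length := by simp [hv]; omega
    rw [hidx j hj', hv, List.getD_append _ _ _ _ hj]
  · intro hall
    have hvlen : v.length = n := by simp [hv, hn]
    have hpref : pref (F idx) n = v := by
      rw [← hvlen]; exact pref_eq_of_extends _ _ hidx
    have hle := hall n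
    rw [hpref] at hle
    have hlt : KCv F v < ((N + 1 : ℕ) : ℕ∞) := by
      refine lt_of_le_of_lt hle ?_
      exact_mod_cast Nat.lt_succ_self N
    rw [KCv, sInf_lt_iff] at hlt
    obtain ⟨a, ⟨j, hj, rfl⟩, hja⟩ := hlt
    have hja' : (j : ℕ∞) < ((N + 1 : ℕ) : ℕ∞) := hja
    have hjN : j < N + 1 := by exact_mod_cast hja'
    have hji : F j u.length = i := by
      have := hj u.length (by simp [hv])
      rwa [hv, List.getD_append_right _ _ _ _ le_rfl, Nat.sub_self] at this
    have hsup : F j u.length ≤ (Finset.range (N + 1)).sup (fun j => F j u.length) :=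
      Finset.le_sup (f := fun j => F j u.length) (Finset.mem_range.mpr hjN)
    omega
end

section
/- If a set A ⊆ 𝒞 is semi-decidable from 𝒞-indices (there is a partial computable φ such that for all i, φ(i) halts iff f_i ∈ A), then A is semi-decidable given oracle access to f together with any upper bound k ≥ K_𝒞(f): the procedure that, given k and oracle f, searches for a stage at which every i ≤ k is either seen to satisfy f_i ≠ f (by finding n with f_i(n) ≠ f(n)) or accepted by φ, correctly semi-decides f ∈ A. -/
/-- correctness of the semi-decision procedure from an oracle and a
bound `k ≥ K_𝒞(f)`: `f ∈ A` iff every `i ≤ k` is rejected or accepted. -/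
theorem stmt12 (F : ℕ → ℕ → ℕ) (A : Set (ℕ → ℕ)) (φ : ℕ →. Unit)
    (hφ : Partrec φ) (hsemi : ∀ i, (φ i).Dom ↔ F i ∈ A)
    (f : ℕ → ℕ) (k : ℕ) (hk : ∃ i ≤ k, F i = f) :
    f ∈ A ↔ ∀ i ≤ k, (∃ n, F i n ≠ f n) ∨ (φ i).Dom := by
  constructor
  · intro hf i _
    by_cases h : F i = f
    · exact Or.inr ((hsemi i).mpr (h ▸ hf))
    · exact Or.inl (by
        by_contra hc
        push_neg at hc
        exact h (funext hc))
  · intro h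
    obtain ⟨i, hik, hfi⟩ := hk
    rcases h i hik with ⟨n, hn⟩ | hd
    · exact absurd (congrFun hfi n) hn
    · exact hfi ▸ (hsemi i).mp hd
end

section
/- Induction step of the construction: suppose [v] ∩ 𝒞_{k+1}^{p_1} ∩ … ∩ 𝒞_{k+i}^{p_i} ∩ 𝒞_{k+i+1} ⊆ U_{k+i+2}, where U_{k+i+2} is open in ℕ^ℕ and the left-hand side is a finite set of functions. Then there exists p (and hence p_{i+1} > p_i) such that [v] ∩ 𝒞_{k+1}^{p_1} ∩ … ∩ 𝒞_{k+i}^{p_i} ∩ 𝒞_{k+i+1}^{p} ⊆ U_{k+i+2}. -/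
/-!
Only the finitely many functions `F m`, `m ≤ k + i + 1`, can satisfy the hypothesis, and each one
lying in `U` has a cylinder around it inside `U`; take `q` beyond the lengths of all these cylinders,
beyond `v` and beyond every `p j`. If `g` meets the constraints with `K_𝒞(g↾q) ≤ k + i + 1`, some
`F m` with `m ≤ k + i + 1` agrees with `g` below `q`, so `F m` meets the same constraints (they only
read prefixes of length at most `q`), hence lies in `U`, and `g` lies in its cylinder of length `q`.
-/

open Filter PiNat

namespace PiNat

variable {E : ℕ → Type*} [∀ n, TopologicalSpace (E n)] [∀ n, DiscreteTopology (E n)]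

theorem eventually_cylinder_subset_of_isOpen {U : Set (∀ n, E n)} (hU : IsOpen U) {x : ∀ n, E n}
    (hx : x ∈ U) : ∀ᶠ n in atTop, cylinder x n ⊆ U := by
  obtain ⟨_, ⟨y, N, rfl⟩, hxy, hyU⟩ :=
    (isTopologicalBasis_cylinders E).exists_subset_of_mem_open hx hU
  rw [← mem_cylinder_iff_eq.1 hxy] at hyU
  exact eventually_atTop.2 ⟨N, fun n hn => (cylinder_anti x hn).trans hyU⟩

theorem _root_.Set.Finite.eventually_cylinder_subset {U s : Set (∀ n, E n)} (hs : s.Finite)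
    (hU : IsOpen U) (hsU : s ⊆ U) : ∀ᶠ n in atTop, ∀ x ∈ s, cylinder x n ⊆ U :=
  (eventually_all_finite hs).2 fun _ hx => eventually_cylinder_subset_of_isOpen hU (hsU hx)

end PiNat

theorem pref_eq_of_mem_cylinder {f g : ℕ → ℕ} {n q : ℕ} (hg : g ∈ cylinder f q) (hn : n ≤ q) :
    pref g n = pref f n :=
  List.map_congr_left fun j hj => hg j ((List.mem_range.1 hj).trans_le hn)

theorem extends_pref_iff_s18 {f g : ℕ → ℕ} {q : ℕ} : Extends f (pref g q) ↔ f ∈ cylinder g q := by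
  simp +contextual [Extends, pref, mem_cylinder_iff]

theorem Extends.of_mem_cylinder {f g : ℕ → ℕ} {v : List ℕ} {q : ℕ} (hf : Extends f v)
    (hg : g ∈ cylinder f q) (hv : v.length ≤ q) : Extends g v :=
  fun j hj => (hg j (hj.trans_le hv)).trans (hf j hj)

theorem KCv_le_iff {F : ℕ → ℕ → ℕ} {v : List ℕ} {n : ℕ} :
    KCv F v ≤ n ↔ ∃ m ≤ n, Extends (F m) v := by
  constructor
  · intro h
    have hne : ((fun i : ℕ => (i : ℕ∞)) '' {i | Extends (F i) v}).Nonempty := by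
      by_contra! hempty
      simp [KCv, hempty] at h
    obtain ⟨m, hm, hmK⟩ := csInf_mem hne
    exact ⟨m, Nat.cast_le.1 (hmK.trans_le h), hm⟩
  · rintro ⟨m, hm, hext⟩
    exact (sInf_le (Set.mem_image_of_mem _ hext)).trans (Nat.cast_le.2 hm)

/-- induction step — replacing `𝒞_{k+i+1}` by `𝒞_{k+i+1}^{p}` for
some `p > p_i` preserves the inclusion into the open set `U`. -/
theorem stmt18 (F : ℕ → ℕ → ℕ) (U : Set (ℕ → ℕ)) (hU : IsOpen U)
    (k i : ℕ) (v : List ℕ) (p : ℕ → ℕ)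
    (hyp : {g | Extends g v} ∩
        (⋂ j ∈ Finset.Icc 1 i, {g | KCv F (pref g (p j)) ≤ ((k + j : ℕ) : ℕ∞)}) ∩
        {g | ∃ m ≤ k + i + 1, F m = g} ⊆ U) :
    ∃ q, q > p i ∧
      {g | Extends g v} ∩
        (⋂ j ∈ Finset.Icc 1 i, {g | KCv F (pref g (p j)) ≤ ((k + j : ℕ) : ℕ∞)}) ∩
        {g | KCv F (pref g q) ≤ ((k + i + 1 : ℕ) : ℕ∞)} ⊆ U := by
  have hcand : {g | ∃ m ≤ k + i + 1, F m = g}.Finite :=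
    ((Set.finite_Iic _).image F).subset fun _ ⟨m, hm, hg⟩ => ⟨m, hm, hg⟩
  obtain ⟨q, hq, hqv, hqp, hqU⟩ := ((eventually_gt_atTop (p i)).and <|
    (eventually_ge_atTop v.length).and <| (eventually_ge_atTop ((Finset.Icc 1 i).sup p)).and <|
    (hcand.inter_of_right _).eventually_cylinder_subset hU hyp).exists
  refine ⟨q, hq, ?_⟩
  rintro g ⟨⟨hgv, hgp⟩, hgK⟩
  obtain ⟨m, hm, hFm⟩ := KCv_le_iff.1 hgK
  rw [extends_pref_iff_s18] at hFm
  refine hqU (F m) ⟨⟨Extends.of_mem_cylinder hgv hFm hqv, ?_⟩, m, hm, rfl⟩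
    ((mem_cylinder_comm _ _ _).1 hFm)
  simp only [Set.mem_iInter] at hgp ⊢
  intro j hj
  rw [Set.mem_ofPred_eq, pref_eq_of_mem_cylinder hFm ((Finset.le_sup hj).trans hqp)]
  exact hgp j hj
end
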